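/- arXiv:math/0107068 — 2 statements merged into one kernel-verified Lean document; each statement's English description precedes it below -/
import Mathlib

section
/- Let {Z_n} be a supercritical Galton–Watson process with Z₀ = 1, offspring mean δ ∈ (1,∞), and extinction probability q(δ) < 1. Suppose there exists α > 0 with P(Z_r ≥ α δ^r for all r ≥ 0) ≥ (1 − q(δ))/2. Then for all integers 0 ≤ ℓ < k, P(Z_k < α δ^{k−ℓ} | Z_ℓ) ≤ ((1 + q(δ))/2)^{Z_ℓ} almost surely. -/
/-!
Given the first `ℓ` generations, with `Z_ℓ = j`, the `j` subtrees rooted in generation `ℓ` are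
independent copies of the process. To see this on the fixed labelling
`Z_{n+1} = ∑_{i < Z_n} ξ n i`, condition on where the blocks of the first `t` subtrees end in
each generation: on such an event the `t`-th subtree is driven by the offspring numbers at a fixed
set of positions, disjoint from all positions read so far, so it is independent of the past and
distributed as `Z`. Hence
`P(Z_ℓ = j, the first t subtrees are small at depth K) = P(Z_K small)^t · P(Z_ℓ = j)`.
Since `Z_{ℓ+K} < α δ^K` makes every subtree small, and `P(Z_K < α δ^K) ≤ (1 + q)/2` by
hypothesis, the bound follows with `t = j`. The computation is done on `ℕ^(ℕ × ℕ)` with the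
product law, which is the law of `(ξ n i)` by independence.
-/

open MeasureTheory ProbabilityTheory Finset

lemma dependsOn_mem_of_forall_mem {ι : Type*} {X : ι → Type*} {A : Set (Π i, X i)} {S : Set ι}
    (h : ∀ x y, (∀ i ∈ S, x i = y i) → x ∈ A → y ∈ A) : DependsOn (· ∈ A) S :=
  fun x y hxy => propext ⟨h x y hxy, h y x fun i hi => (hxy i hi).symm⟩

section DependsOn

variable {ι : Type*} {X : ι → Type*} [∀ i, MeasurableSpace (X i)]

lemma measurableSet_iSup_comap_eval_of_dependsOn {S : Set ι} {A : Set (Π i, X i)}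
    (hA : MeasurableSet A) (hAS : DependsOn (· ∈ A) S) :
    MeasurableSet[⨆ i ∈ S, MeasurableSpace.comap (fun x : Π i, X i => x i) inferInstance]
      A := by
  classical
  set m : MeasurableSpace (Π i, X i) :=
    ⨆ i ∈ S, MeasurableSpace.comap (fun x : Π i, X i => x i) inferInstance
  obtain rfl | ⟨x₀, -⟩ := A.eq_empty_or_nonempty
  · exact m.measurableSet_empty
  set proj : (Π i, X i) → Π i, X i := fun x => S.piecewise x x₀
  have hproj : @Measurable _ _ m MeasurableSpace.pi proj := by
    refine @measurable_pi_lambda _ _ _ m _ proj fun i => ?_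
    by_cases hi : i ∈ S
    · simp only [proj, Set.piecewise_eq_of_mem _ _ _ hi]
      exact Measurable.of_comap_le
        (le_biSup (fun i => MeasurableSpace.comap (fun x : Π i, X i => x i) inferInstance) hi)
    · simp only [proj, Set.piecewise_eq_of_notMem _ _ _ hi]
      exact measurable_const
  have hA_eq : proj ⁻¹' A = A := by
    ext x
    exact Eq.to_iff (hAS fun i hi => Set.piecewise_eq_of_mem _ _ _ hi)
  exact hA_eq ▸ hproj hA

lemma infinitePi_inter_eq_mul_of_dependsOn {P : ∀ i, Measure (X i)}
    [∀ i, IsProbabilityMeasure (P i)] {S T : Set ι} (hST : Disjoint S T)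
    {A B : Set (Π i, X i)} (hA : MeasurableSet A) (hB : MeasurableSet B)
    (hAS : DependsOn (· ∈ A) S) (hBT : DependsOn (· ∈ B) T) :
    Measure.infinitePi P (A ∩ B) = Measure.infinitePi P A * Measure.infinitePi P B := by
  have hindep := indep_iSup_of_disjoint (fun i => (measurable_pi_apply i).comap_le)
    (iIndepFun_infinitePi (P := P) (X := fun _ x => x) fun _ => measurable_id).iIndep hST
  exact (Indep_iff _ _ _).1 hindep A B (measurableSet_iSup_comap_eval_of_dependsOn hA hAS)
    (measurableSet_iSup_comap_eval_of_dependsOn hB hBT)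

end DependsOn

lemma measure_inter_eq_mul_of_fibers {α ι : Type*} [MeasurableSpace α] {μ : Measure α}
    [Countable ι] {V : α → ι} (hV : ∀ v, MeasurableSet (V ⁻¹' {v})) {G F : Set α}
    (hG : MeasurableSet G) (hF : MeasurableSet F) {r : ENNReal}
    (h : ∀ v, μ (G ∩ V ⁻¹' {v} ∩ F) = r * μ (G ∩ V ⁻¹' {v})) :
    μ (G ∩ F) = r * μ G := by
  have hsum : ∀ E, MeasurableSet E → μ E = ∑' v, μ (E ∩ V ⁻¹' {v}) := fun E hE => by
    rw [← measure_iUnion (fun v w hvw => ((Set.disjoint_singleton.2 hvw).preimage V).mono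
      Set.inter_subset_right Set.inter_subset_right) (fun v => hE.inter (hV v)),
      ← Set.inter_iUnion, ← Set.preimage_iUnion, Set.iUnion_singleton_eq_range, Set.range_id',
      Set.preimage_univ, Set.inter_univ]
  rw [hsum _ (hG.inter hF), hsum _ hG, ← ENNReal.tsum_mul_left]
  exact tsum_congr fun v => by rw [← h v, Set.inter_right_comm]

lemma measure_le_ofReal_of_ofReal_le_measure_compl {α : Type*} [MeasurableSpace α]
    {μ : Measure α} [IsProbabilityMeasure μ] {S : Set α} (hS : MeasurableSet S) {a b : ℝ}
    (hab : a + b = 1) (h : ENNReal.ofReal a ≤ μ Sᶜ) : μ S ≤ ENNReal.ofReal b := by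
  have hsum : 1 ≤ ENNReal.ofReal a + ENNReal.ofReal b := by
    rw [← ENNReal.ofReal_one, ← hab]
    exact ENNReal.ofReal_add_le
  rw [← compl_compl S, prob_compl_eq_one_sub hS.compl]
  exact tsub_le_iff_left.2 (hsum.trans (by gcongr))

lemma sum_range_sum_eq_sum_blocks {M : Type*} [AddCommMonoid M] (f : ℕ → M) (g : ℕ → ℕ)
    (n : ℕ) :
    ∑ i ∈ range (∑ u ∈ range n, g u), f i
      = ∑ u ∈ range n, ∑ i ∈ range (g u), f ((∑ v ∈ range u, g v) + i) := by
  induction n with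
  | zero => simp
  | succ n ih => rw [sum_range_succ, sum_range_succ, ← ih, sum_range_add]

lemma measurable_of_nat_index {α β : Type*} [MeasurableSpace α] [MeasurableSpace β]
    {a : α → ℕ} (ha : Measurable a) {f : ℕ → α → β} (hf : ∀ n, Measurable (f n)) :
    Measurable fun x => f (a x) x :=
  (measurable_from_prod_countable_left (f := fun p : α × ℕ => f p.2 p.1) hf).comp
    (measurable_id.prodMk ha)

namespace GaltonWatson

def size (x : ℕ × ℕ → ℕ) : ℕ → ℕ
  | 0 => 1
  | n + 1 => ∑ i ∈ range (size x n), x (n, i)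

/-- Children are numbered consecutively in the order of their parents, so the descendants in
generation `ℓ + m` of individual `u` of generation `ℓ` form a block of `subtreeSize x ℓ m u`
consecutive individuals, starting at `subtreeStart x ℓ m u`. -/
def subtreeSize (x : ℕ × ℕ → ℕ) (ℓ : ℕ) : ℕ → ℕ → ℕ
  | 0, _ => 1
  | m + 1, u => ∑ i ∈ range (subtreeSize x ℓ m u),
      x (ℓ + m, (∑ v ∈ range u, subtreeSize x ℓ m v) + i)

def subtreeStart (x : ℕ × ℕ → ℕ) (ℓ m u : ℕ) : ℕ :=
  ∑ v ∈ range u, subtreeSize x ℓ m v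

def shift (x : ℕ × ℕ → ℕ) (ℓ : ℕ) (c : ℕ → ℕ) : ℕ × ℕ → ℕ :=
  fun p => x (ℓ + p.1, c p.1 + p.2)

variable {x y : ℕ × ℕ → ℕ} {ℓ : ℕ}

lemma eq_size {z : ℕ → ℕ} (h0 : z 0 = 1)
    (hsucc : ∀ n, z (n + 1) = ∑ i ∈ range (z n), x (n, i)) (n : ℕ) : z n = size x n := by
  induction n with
  | zero => exact h0
  | succ n ih => rw [hsucc, ih]; rfl

lemma subtreeSize_succ (m u : ℕ) :
    subtreeSize x ℓ (m + 1) u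
      = ∑ i ∈ range (subtreeSize x ℓ m u), x (ℓ + m, subtreeStart x ℓ m u + i) :=
  rfl

lemma subtreeSize_eq_size_shift (m u : ℕ) :
    subtreeSize x ℓ m u = size (shift x ℓ fun m => subtreeStart x ℓ m u) m := by
  induction m with
  | zero => rfl
  | succ m ih => rw [subtreeSize_succ, ih]; rfl

lemma sum_subtreeSize (m : ℕ) :
    ∑ u ∈ range (size x ℓ), subtreeSize x ℓ m u = size x (ℓ + m) := by
  induction m with
  | zero => simp [subtreeSize]
  | succ m ih =>
    rw [← add_assoc, size, ← ih, sum_range_sum_eq_sum_blocks]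
    rfl

lemma subtreeSize_le_size {u : ℕ} (hu : u < size x ℓ) (m : ℕ) :
    subtreeSize x ℓ m u ≤ size x (ℓ + m) :=
  sum_subtreeSize (x := x) m ▸ single_le_sum (fun _ _ => Nat.zero_le _) (mem_range.2 hu)

lemma dependsOn_size (n : ℕ) : DependsOn (size · n) {p | p.1 < n} := by
  intro x y hxy
  induction n with
  | zero => rfl
  | succ n ih =>
    have hn : size x n = size y n := ih fun p hp => hxy p (Nat.lt_succ_of_lt hp)
    change size x (n + 1) = size y (n + 1)
    rw [size, size, hn]
    exact sum_congr rfl fun i _ => hxy (n, i) (Nat.lt_succ_self n)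

lemma subtreeSize_eq_size_shift_of_subtreeStart_eq {t K : ℕ} {c : ℕ → ℕ}
    (hc : ∀ m < K, subtreeStart x ℓ m t = c m) :
    subtreeSize x ℓ K t = size (shift x ℓ c) K := by
  rw [subtreeSize_eq_size_shift]
  exact dependsOn_size K fun p hp => by simp only [shift, hc p.1 hp]

lemma dependsOn_shift (ℓ : ℕ) (c : ℕ → ℕ) :
    DependsOn (shift · ℓ c) {p | ∃ m, p.1 = ℓ + m ∧ c m ≤ p.2} :=
  fun _ _ hxy => funext fun p => hxy _ ⟨p.1, rfl, Nat.le_add_right _ _⟩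

lemma subtreeSize_congr {t K : ℕ}
    (hxy : ∀ m < K, ∀ i < subtreeStart x ℓ m t, x (ℓ + m, i) = y (ℓ + m, i))
    {m : ℕ} (hm : m ≤ K) {u : ℕ} (hu : u < t) :
    subtreeSize y ℓ m u = subtreeSize x ℓ m u := by
  induction m generalizing u with
  | zero => rfl
  | succ m ih =>
    have ih' : ∀ v < t, subtreeSize y ℓ m v = subtreeSize x ℓ m v :=
      fun v hv => ih (by omega) hv
    have hstart : subtreeStart y ℓ m u = subtreeStart x ℓ m u :=
      sum_congr rfl fun v hv => ih' v ((mem_range.1 hv).trans hu)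
    rw [subtreeSize_succ, subtreeSize_succ, ih' u hu, hstart]
    refine sum_congr rfl fun i hi => (hxy m hm _ ?_).symm
    calc subtreeStart x ℓ m u + i < subtreeStart x ℓ m (u + 1) := by
          unfold subtreeStart
          rw [sum_range_succ]
          exact Nat.add_lt_add_left (mem_range.1 hi) _
      _ ≤ subtreeStart x ℓ m t := sum_le_sum_of_subset (range_subset_range.2 hu)

lemma subtreeStart_congr {t K : ℕ}
    (hxy : ∀ m < K, ∀ i < subtreeStart x ℓ m t, x (ℓ + m, i) = y (ℓ + m, i))
    {m : ℕ} (hm : m ≤ K) : subtreeStart y ℓ m t = subtreeStart x ℓ m t :=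
  sum_congr rfl fun _ hu => subtreeSize_congr hxy hm (mem_range.1 hu)

lemma measurable_size (n : ℕ) : Measurable fun x : ℕ × ℕ → ℕ => size x n := by
  induction n with
  | zero => exact measurable_const
  | succ n ih =>
    exact measurable_of_nat_index ih fun _ =>
      Finset.measurable_sum _ fun i _ =>
        (measurable_pi_apply _ : Measurable fun x : ℕ × ℕ → ℕ => x (n, i))

lemma measurable_subtreeSize (ℓ m u : ℕ) :
    Measurable fun x : ℕ × ℕ → ℕ => subtreeSize x ℓ m u := by
  induction m generalizing u with
  | zero => exact measurable_const
  | succ m ih =>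
    have hstart : Measurable fun x : ℕ × ℕ → ℕ => subtreeStart x ℓ m u :=
      Finset.measurable_sum _ fun v _ => ih v
    exact measurable_of_nat_index (ih u) fun _ => Finset.measurable_sum _ fun i _ =>
      measurable_of_nat_index (hstart.add_const i) fun c =>
        (measurable_pi_apply _ : Measurable fun x : ℕ × ℕ → ℕ => x (ℓ + m, c))

lemma measurable_subtreeStart (ℓ m u : ℕ) :
    Measurable fun x : ℕ × ℕ → ℕ => subtreeStart x ℓ m u :=
  Finset.measurable_sum _ fun v _ => measurable_subtreeSize ℓ m v

lemma dependsOn_subtreeHistory {E : Set (ℕ × ℕ → ℕ)} (hE : DependsOn (· ∈ E) {p | p.1 < ℓ})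
    (s : Set ℕ) (K t : ℕ) (c : ℕ → ℕ) :
    DependsOn (· ∈ E ∩ {x | ∀ u < t, subtreeSize x ℓ K u ∈ s}
        ∩ {x | ∀ m < K, subtreeStart x ℓ m t = c m})
      {p | p.1 < ℓ ∨ ∃ m < K, p.1 = ℓ + m ∧ p.2 < c m} := by
  refine dependsOn_mem_of_forall_mem ?_
  rintro x y hxy ⟨⟨hxE, hxs⟩, hxc⟩
  have hblock : ∀ m < K, ∀ i < subtreeStart x ℓ m t, x (ℓ + m, i) = y (ℓ + m, i) :=
    fun m hm i hi => hxy _ (Or.inr ⟨m, hm, rfl, hxc m hm ▸ hi⟩)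
  refine ⟨⟨(hE fun p hp => hxy p (Or.inl hp)).to_iff.1 hxE, fun u hu => ?_⟩, fun m hm => ?_⟩
  · rw [subtreeSize_congr hblock le_rfl hu]
    exact hxs u hu
  · rw [subtreeStart_congr hblock hm.le]
    exact hxc m hm

lemma measurable_shift (ℓ : ℕ) (c : ℕ → ℕ) : Measurable (shift · ℓ c) :=
  measurable_pi_lambda _ fun _ => measurable_pi_apply _

lemma measurableSet_forall_subtreeSize_mem (s : Set ℕ) (ℓ K t : ℕ) :
    MeasurableSet {x | ∀ u < t, subtreeSize x ℓ K u ∈ s} := by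
  simp only [Set.ofPred_forall]
  exact .iInter fun u => .iInter fun _ =>
    measurable_subtreeSize ℓ K u (Set.to_countable s).measurableSet

variable (ν : Measure ℕ) [IsProbabilityMeasure ν]

local notation "𝐏" => Measure.infinitePi fun _ : ℕ × ℕ => ν

lemma infinitePi_map_shift (ℓ : ℕ) (c : ℕ → ℕ) : 𝐏.map (shift · ℓ c) = 𝐏 := by
  refine Measure.map_infinitePi_infinitePi_of_inj
    (f := fun p : ℕ × ℕ => (ℓ + p.1, c p.1 + p.2)) ?_
  rintro ⟨a, b⟩ ⟨a', b'⟩ h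
  simp only [Prod.mk.injEq] at h
  obtain rfl : a = a' := by omega
  obtain rfl : b = b' := by omega
  rfl

lemma infinitePi_subtree_step {E : Set (ℕ × ℕ → ℕ)} (hE : MeasurableSet E)
    (hEℓ : DependsOn (· ∈ E) {p | p.1 < ℓ}) (s : Set ℕ) (K t : ℕ) :
    𝐏 (E ∩ {x | ∀ u < t, subtreeSize x ℓ K u ∈ s} ∩ {x | subtreeSize x ℓ K t ∈ s})
      = 𝐏 {x | size x K ∈ s} * 𝐏 (E ∩ {x | ∀ u < t, subtreeSize x ℓ K u ∈ s}) := by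
  have hs : ∀ f : (ℕ × ℕ → ℕ) → ℕ, Measurable f → MeasurableSet {x | f x ∈ s} :=
    fun f hf => hf (Set.to_countable s).measurableSet
  have hG := hE.inter (measurableSet_forall_subtreeSize_mem s ℓ K t)
  set V : (ℕ × ℕ → ℕ) → Fin K → ℕ := fun x m => subtreeStart x ℓ m t
  have hV : Measurable V := measurable_pi_lambda _ fun m => measurable_subtreeStart ℓ m t
  refine measure_inter_eq_mul_of_fibers (fun c => hV (measurableSet_singleton c)) hG
    (hs _ (measurable_subtreeSize ℓ K t)) fun c => ?_
  set c' : ℕ → ℕ := Function.extend Fin.val c 0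
  have hfiber : V ⁻¹' {c} = {x | ∀ m < K, subtreeStart x ℓ m t = c' m} := by
    ext x
    simp only [V, Set.mem_preimage, Set.mem_singleton_iff, funext_iff, Fin.forall_iff]
    refine forall₂_congr fun m hm => ?_
    rw [← Fin.val_injective.extend_apply c 0 ⟨m, hm⟩]
  have hfiber_inter : E ∩ {x | ∀ u < t, subtreeSize x ℓ K u ∈ s} ∩ V ⁻¹' {c}
      ∩ {x | subtreeSize x ℓ K t ∈ s}
      = E ∩ {x | ∀ u < t, subtreeSize x ℓ K u ∈ s} ∩ V ⁻¹' {c}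
        ∩ (shift · ℓ c') ⁻¹' {x | size x K ∈ s} := by
    ext x
    simp only [Set.mem_inter_iff, Set.mem_preimage, Set.mem_ofPred_eq]
    refine and_congr_right fun hxG => ?_
    have hxc : x ∈ {x | ∀ m < K, subtreeStart x ℓ m t = c' m} := by
      rw [← hfiber]
      exact hxG.2
    rw [subtreeSize_eq_size_shift_of_subtreeStart_eq hxc]
  -- the history of the first `t` subtrees and the `t`-th subtree read disjoint sets of positions
  have hdisj : Disjoint {p : ℕ × ℕ | p.1 < ℓ ∨ ∃ m < K, p.1 = ℓ + m ∧ p.2 < c' m}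
      {p | ∃ m, p.1 = ℓ + m ∧ c' m ≤ p.2} := by
    refine Set.disjoint_left.2 ?_
    rintro p (hp | ⟨m, -, hm, hlt⟩) ⟨m', hm', hle⟩
    · omega
    · obtain rfl : m = m' := by omega
      omega
  have hB := hs _ (measurable_size K)
  rw [hfiber_inter, infinitePi_inter_eq_mul_of_dependsOn hdisj
    (hG.inter (hV (measurableSet_singleton c))) (measurable_shift ℓ c' hB)
    (hfiber ▸ dependsOn_subtreeHistory hEℓ s K t c')
    (fun _ _ hxy => congrArg (size · K ∈ s) (dependsOn_shift ℓ c' hxy)),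
    ← Measure.map_apply (measurable_shift ℓ c') hB,
    infinitePi_map_shift, mul_comm]

lemma infinitePi_subtrees {E : Set (ℕ × ℕ → ℕ)} (hE : MeasurableSet E)
    (hEℓ : DependsOn (· ∈ E) {p | p.1 < ℓ}) (s : Set ℕ) (K t : ℕ) :
    𝐏 (E ∩ {x | ∀ u < t, subtreeSize x ℓ K u ∈ s}) = 𝐏 {x | size x K ∈ s} ^ t * 𝐏 E := by
  induction t with
  | zero => simp
  | succ t ih =>
    have hsplit : E ∩ {x | ∀ u < t + 1, subtreeSize x ℓ K u ∈ s}
        = E ∩ {x | ∀ u < t, subtreeSize x ℓ K u ∈ s} ∩ {x | subtreeSize x ℓ K t ∈ s} := by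
      ext x
      constructor
      · rintro ⟨hxE, hx⟩
        exact ⟨⟨hxE, fun u hu => hx u (by omega)⟩, hx t (by omega)⟩
      · rintro ⟨⟨hxE, hx⟩, hxt⟩
        refine ⟨hxE, fun u hu => ?_⟩
        rcases Nat.lt_succ_iff_lt_or_eq.1 hu with hu | rfl
        exacts [hx u hu, hxt]
    rw [hsplit, infinitePi_subtree_step ν hE hEℓ, ih, pow_succ]
    ring

theorem infinitePi_size_mem_inter_size_eq_le {s : Set ℕ} (hs : IsLowerSet s) (ℓ K j : ℕ) :
    𝐏 ({x | size x (ℓ + K) ∈ s} ∩ {x | size x ℓ = j})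
      ≤ 𝐏 {x | size x K ∈ s} ^ j * 𝐏 {x | size x ℓ = j} := by
  calc _ ≤ 𝐏 ({x | size x ℓ = j} ∩ {x | ∀ u < j, subtreeSize x ℓ K u ∈ s}) := by
        refine measure_mono fun x ⟨hx, hxj⟩ => ⟨hxj, fun u hu => hs ?_ hx⟩
        exact subtreeSize_le_size (hxj ▸ hu) K
    _ = _ := infinitePi_subtrees ν (measurable_size ℓ (measurableSet_singleton j))
        (fun _ _ hxy => congrArg (· = j) (dependsOn_size ℓ hxy)) s K j

end GaltonWatson

open GaltonWatson

section

variable {Ω : Type*} [MeasurableSpace Ω] {ξ : ℕ → ℕ → Ω → ℕ} {Z : ℕ → Ω → ℕ}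

lemma measurable_of_forall_eq_sum_range (hmeas : ∀ n i, Measurable (ξ n i))
    (hZ0 : ∀ ω, Z 0 ω = 1) (hZrec : ∀ n ω, Z (n + 1) ω = ∑ i ∈ range (Z n ω), ξ n i ω)
    (n : ℕ) : Measurable (Z n) := by
  induction n with
  | zero => exact (funext hZ0 : Z 0 = fun _ => 1) ▸ measurable_const
  | succ n ih =>
    rw [funext (hZrec n)]
    exact measurable_of_nat_index ih fun _ => Finset.measurable_sum _ fun i _ => hmeas n i

theorem measure_mem_inter_eq_le_pow_mul {μ : Measure Ω} [IsProbabilityMeasure μ]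
    (hmeas : ∀ n i, Measurable (ξ n i)) (hindep : iIndepFun (fun p : ℕ × ℕ => ξ p.1 p.2) μ)
    (hident : ∀ n i, μ.map (ξ n i) = μ.map (ξ 0 0))
    (hZ0 : ∀ ω, Z 0 ω = 1) (hZrec : ∀ n ω, Z (n + 1) ω = ∑ i ∈ range (Z n ω), ξ n i ω)
    {s : Set ℕ} (hs : IsLowerSet s) (ℓ K j : ℕ) :
    μ ({ω | Z (ℓ + K) ω ∈ s} ∩ {ω | Z ℓ ω = j})
      ≤ μ {ω | Z K ω ∈ s} ^ j * μ {ω | Z ℓ ω = j} := by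
  set X : Ω → ℕ × ℕ → ℕ := fun ω p => ξ p.1 p.2 ω
  have hX : Measurable X := measurable_pi_lambda _ fun p => hmeas p.1 p.2
  have hZX : ∀ n (t : Set ℕ), {ω | Z n ω ∈ t} = X ⁻¹' {x | size x n ∈ t} := fun n t => by
    ext ω
    rw [Set.mem_preimage, Set.mem_ofPred_eq, Set.mem_ofPred_eq,
      eq_size (z := (Z · ω)) (x := X ω) (hZ0 ω) (fun n => hZrec n ω) n]
  have : IsProbabilityMeasure (μ.map (ξ 0 0)) :=
    Measure.isProbabilityMeasure_map (hmeas 0 0).aemeasurable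
  set P := Measure.infinitePi fun _ : ℕ × ℕ => μ.map (ξ 0 0)
  have hP : ∀ A, MeasurableSet A → μ (X ⁻¹' A) = P A := fun A hA => by
    rw [← Measure.map_apply hX hA,
      hindep.map_fun_eq_infinitePi_map fun p : ℕ × ℕ => hmeas p.1 p.2]
    simp only [P, hident]
  have hsize : ∀ n (t : Set ℕ), MeasurableSet {x | size x n ∈ t} :=
    fun n t => measurable_size n (Set.to_countable t).measurableSet
  rw [show {ω | Z ℓ ω = j} = {ω | Z ℓ ω ∈ ({j} : Set ℕ)} from rfl, hZX, hZX, hZX,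
    ← Set.preimage_inter, hP _ ((hsize _ _).inter (hsize _ _)), hP _ (hsize _ _),
    hP _ (hsize _ _)]
  exact infinitePi_size_mem_inter_size_eq_le _ hs ℓ K j

end

theorem stmt9_general {Ω : Type*} [MeasurableSpace Ω] (μ : Measure Ω) [IsProbabilityMeasure μ]
    (ξ : ℕ → ℕ → Ω → ℕ) (Z : ℕ → Ω → ℕ)
    (hmeas : ∀ n i, Measurable (ξ n i))
    (hindep : iIndepFun (fun p : ℕ × ℕ => ξ p.1 p.2) μ)
    (hident : ∀ n i, Measure.map (ξ n i) μ = Measure.map (ξ 0 0) μ)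
    (hZ0 : ∀ ω, Z 0 ω = 1)
    (hZrec : ∀ n ω, Z (n + 1) ω = ∑ i ∈ Finset.range (Z n ω), ξ n i ω)
    (δ : ℝ)
    (q : ℝ) (hqdef : q = (μ {ω | ∃ n, Z n ω = 0}).toReal)
    (α : ℝ)
    (hαbound : ENNReal.ofReal ((1 - q) / 2)
      ≤ μ {ω | ∀ r : ℕ, α * δ ^ r ≤ (Z r ω : ℝ)})
    (ℓ k : ℕ) (hlk : ℓ < k) (j : ℕ) :
    μ ({ω | (Z k ω : ℝ) < α * δ ^ (k - ℓ)} ∩ {ω | Z ℓ ω = j})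
      ≤ ENNReal.ofReal (((1 + q) / 2) ^ j) * μ {ω | Z ℓ ω = j} := by
  set small : Set ℕ := {n | (n : ℝ) < α * δ ^ (k - ℓ)}
  have hsmall : μ {ω | Z (k - ℓ) ω ∈ small} ≤ ENNReal.ofReal ((1 + q) / 2) :=
    measure_le_ofReal_of_ofReal_le_measure_compl (a := (1 - q) / 2)
      (measurable_of_forall_eq_sum_range hmeas hZ0 hZrec _ (Set.to_countable small).measurableSet)
      (by ring) (hαbound.trans (measure_mono fun ω hω => not_lt.2 (hω (k - ℓ))))
  have hlower : IsLowerSet small := fun _ b hba ha =>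
    show (b : ℝ) < _ from (Nat.cast_le.2 hba).trans_lt ha
  have hq : 0 ≤ q := hqdef ▸ ENNReal.toReal_nonneg
  calc _ = μ ({ω | Z (ℓ + (k - ℓ)) ω ∈ small} ∩ {ω | Z ℓ ω = j}) := by
        rw [Nat.add_sub_cancel' hlk.le]
        rfl
    _ ≤ μ {ω | Z (k - ℓ) ω ∈ small} ^ j * μ {ω | Z ℓ ω = j} :=
        measure_mem_inter_eq_le_pow_mul hmeas hindep hident hZ0 hZrec hlower ℓ (k - ℓ) j
    _ ≤ _ := by
        rw [ENNReal.ofReal_pow (by linarith)]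
        gcongr

/-- Let `Z` be a supercritical Galton–Watson process with `Z₀ = 1`,
offspring mean `δ ∈ (1,∞)` and extinction probability `q < 1`. If
`P(Z_r ≥ α δ^r for all r) ≥ (1 − q)/2` for some `α > 0`, then for `ℓ < k`,
`P(Z_k < α δ^{k−ℓ} | Z_ℓ) ≤ ((1 + q)/2)^{Z_ℓ}` a.s.; equivalently, for every `j`,
`μ({Z_k < α δ^{k−ℓ}} ∩ {Z_ℓ = j}) ≤ ((1 + q)/2)^j · μ{Z_ℓ = j}`. -/
theorem stmt9 {Ω : Type*} [MeasurableSpace Ω] (μ : Measure Ω) [IsProbabilityMeasure μ]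
    (ξ : ℕ → ℕ → Ω → ℕ) (Z : ℕ → Ω → ℕ)
    (hmeas : ∀ n i, Measurable (ξ n i))
    (hindep : iIndepFun (fun p : ℕ × ℕ => ξ p.1 p.2) μ)
    (hident : ∀ n i, Measure.map (ξ n i) μ = Measure.map (ξ 0 0) μ)
    (hZ0 : ∀ ω, Z 0 ω = 1)
    (hZrec : ∀ n ω, Z (n + 1) ω = ∑ i ∈ Finset.range (Z n ω), ξ n i ω)
    (δ : ℝ) (hδ : 1 < δ)
    (hint : Integrable (fun ω => (ξ 0 0 ω : ℝ)) μ)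
    (hmean : ∫ ω, (ξ 0 0 ω : ℝ) ∂μ = δ)
    (q : ℝ) (hqdef : q = (μ {ω | ∃ n, Z n ω = 0}).toReal) (hq1 : q < 1)
    (α : ℝ) (hα : 0 < α)
    (hαbound : ENNReal.ofReal ((1 - q) / 2)
      ≤ μ {ω | ∀ r : ℕ, α * δ ^ r ≤ (Z r ω : ℝ)})
    (ℓ k : ℕ) (hlk : ℓ < k) (j : ℕ) :
    μ ({ω | (Z k ω : ℝ) < α * δ ^ (k - ℓ)} ∩ {ω | Z ℓ ω = j})
      ≤ ENNReal.ofReal (((1 + q) / 2) ^ j) * μ {ω | Z ℓ ω = j} :=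
  stmt9_general μ ξ Z hmeas hindep hident hZ0 hZrec δ q hqdef α hαbound ℓ k hlk j
end

section
/- Let q ∈ [0,1) be the extinction probability (smallest fixed point of the offspring generating function f of a Galton–Watson process with mean δ ∈ (1,∞)), and for K > 0 let q̃(K) be the smallest fixed point in [0,1) of the generating function f̃_K(x) = f(1 − F(K) + F(K)x), where F is a distribution function with F(K) → 1 as K → ∞ and δ F(K₀) > 1 for some K₀. Then q̃(K) → q as K → ∞. -/
/-!
The lower bound `q ≤ q̃(K)` holds for every `K`: the thinned argument `1 - F K + F K x` is at
least `x`, so `f(q̃(K)) ≤ f̃_K(q̃(K)) = q̃(K)`, and the intermediate value theorem on `[0, q̃(K)]`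
yields a fixed point of `f` below `q̃(K)`. For the upper bound: `f` is convex with left derivative
`δ > 1` at `1`, so it lies strictly below the diagonal just to the right of `q`; for such a `y`,
`f̃_K(y) → f(y) < y`, and the intermediate value theorem on `[0, y]` gives `q̃(K) ≤ y` for large `K`.
-/

open Filter Set Topology

noncomputable def pgf (p : ℕ → ℝ) (x : ℝ) : ℝ := ∑' n, p n * x ^ n

lemma IsLeast.le_of_apply_le {g : ℝ → ℝ} {r s : ℝ}
    (hr : IsLeast {x | x ∈ Ico (0 : ℝ) 1 ∧ g x = x} r) (hs : s ∈ Ico (0 : ℝ) 1)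
    (hg : ContinuousOn g (Icc 0 s)) (hg0 : 0 ≤ g 0) (hgs : g s ≤ s) : r ≤ s := by
  obtain ⟨c, hc, hfix⟩ := exists_mem_Icc_isFixedPt hg hs.1 hg0 hgs
  exact (hr.2 ⟨⟨hc.1, hc.2.trans_lt hs.2⟩, hfix⟩).trans hc.2

lemma ConvexOn.apply_lt_self_of_mem_openSegment {f : ℝ → ℝ} {s : Set ℝ} (hf : ConvexOn ℝ s f)
    {a b z : ℝ} (ha : a ∈ s) (hb : b ∈ s) (hfa : f a ≤ a) (hfb : f b < b)
    (hz : z ∈ openSegment ℝ a b) : f z < z := by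
  obtain ⟨s, t, hs, ht, hst, rfl⟩ := hz
  have hconv := hf.2 ha hb hs.le ht.le hst
  simp only [smul_eq_mul] at hconv ⊢
  nlinarith [mul_le_mul_of_nonneg_left hfa hs.le, mul_lt_mul_of_pos_left hfb ht]

lemma one_sub_add_mul_mem_Icc {c x : ℝ} (hc : c ∈ Icc (0 : ℝ) 1) (hx : x ∈ Icc (0 : ℝ) 1) :
    1 - c + c * x ∈ Icc (0 : ℝ) 1 := by
  obtain ⟨hc0, hc1⟩ := hc
  obtain ⟨hx0, hx1⟩ := hx
  constructor <;> nlinarith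

lemma le_one_sub_add_mul {c x : ℝ} (hc : c ≤ 1) (hx : x ≤ 1) : x ≤ 1 - c + c * x := by
  nlinarith

namespace pgf

variable {p : ℕ → ℝ}

lemma nonneg (hp : ∀ n, 0 ≤ p n) {x : ℝ} (hx : 0 ≤ x) : 0 ≤ pgf p x :=
  tsum_nonneg fun n => mul_nonneg (hp n) (pow_nonneg hx n)

lemma summable_mul_pow (hp : ∀ n, 0 ≤ p n) (hps : Summable p) {x : ℝ}
    (hx : x ∈ Icc (0 : ℝ) 1) : Summable fun n => p n * x ^ n :=
  hps.of_nonneg_of_le (fun n => mul_nonneg (hp n) (pow_nonneg hx.1 n))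
    (fun n => mul_le_of_le_one_right (hp n) (pow_le_one₀ hx.1 hx.2))

lemma monotoneOn (hp : ∀ n, 0 ≤ p n) (hps : Summable p) :
    MonotoneOn (pgf p) (Icc 0 1) := fun _ ha _ hb hab =>
  Summable.tsum_le_tsum (fun n => mul_le_mul_of_nonneg_left (pow_le_pow_left₀ ha.1 hab n) (hp n))
    (summable_mul_pow hp hps ha) (summable_mul_pow hp hps hb)

lemma continuousOn (hp : ∀ n, 0 ≤ p n) (hps : Summable p) : ContinuousOn (pgf p) (Icc 0 1) := by
  rw [continuousOn_iff_continuous_domRestrict]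
  refine continuous_tsum (fun n => continuous_const.mul (continuous_subtype_val.pow n)) hps
    fun n x => ?_
  rw [Real.norm_of_nonneg (mul_nonneg (hp n) (pow_nonneg x.2.1 n))]
  exact mul_le_of_le_one_right (hp n) (pow_le_one₀ x.2.1 x.2.2)

lemma convexOn (hp : ∀ n, 0 ≤ p n) (hps : Summable p) : ConvexOn ℝ (Icc 0 1) (pgf p) := by
  refine ⟨convex_Icc 0 1, fun a ha b hb s t hs ht hst => ?_⟩
  have hmem := convex_Icc (0 : ℝ) 1 ha hb hs ht hst
  simp only [smul_eq_mul] at hmem ⊢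
  have hsa := (summable_mul_pow hp hps ha).mul_left s
  have htb := (summable_mul_pow hp hps hb).mul_left t
  rw [pgf, pgf, pgf, ← tsum_mul_left, ← tsum_mul_left, ← hsa.tsum_add htb]
  refine Summable.tsum_le_tsum (fun n => ?_) (summable_mul_pow hp hps hmem) (hsa.add htb)
  have hpow := (convexOn_pow n).2 ha.1 hb.1 hs ht hst
  simp only [smul_eq_mul] at hpow
  nlinarith [mul_le_mul_of_nonneg_left hpow (hp n)]

-- The difference quotient `(1 - pgf p x) / (1 - x)` is `∑ p n (1 + x + ⋯ + x ^ (n - 1))`.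
lemma one_sub_mul_sum_le (hp : ∀ n, 0 ≤ p n) (hsum : HasSum p 1) (N : ℕ) {x : ℝ}
    (hx : x ∈ Icc (0 : ℝ) 1) :
    (1 - x) * ∑ n ∈ Finset.range N, p n * ∑ i ∈ Finset.range n, x ^ i ≤ 1 - pgf p x := by
  have hsx := summable_mul_pow hp hsum.summable hx
  have hdiff : HasSum (fun n => p n * (1 - x ^ n)) (1 - pgf p x) := by
    simpa only [pgf, mul_sub, mul_one] using hsum.sub hsx.hasSum
  calc (1 - x) * ∑ n ∈ Finset.range N, p n * ∑ i ∈ Finset.range n, x ^ i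
      = ∑ n ∈ Finset.range N, p n * (1 - x ^ n) := by
        rw [Finset.mul_sum]
        refine Finset.sum_congr rfl fun n _ => ?_
        linear_combination (-p n) * geom_sum_mul x n
    _ ≤ 1 - pgf p x := hdiff.summable.sum_le_tsum _ (fun n _ =>
        mul_nonneg (hp n) (sub_nonneg.2 (pow_le_one₀ hx.1 hx.2))) |>.trans_eq hdiff.tsum_eq

lemma eventually_lt_self_nhdsLT_one (hp : ∀ n, 0 ≤ p n) (hsum : HasSum p 1) {δ : ℝ}
    (hmean : HasSum (fun n : ℕ => (n : ℝ) * p n) δ) (hδ : 1 < δ) :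
    ∀ᶠ x in 𝓝[<] 1, pgf p x < x := by
  obtain ⟨N, hN⟩ := (hmean.tendsto_sum_nat.eventually (eventually_gt_nhds hδ)).exists
  set g : ℝ → ℝ := fun x => ∑ n ∈ Finset.range N, p n * ∑ i ∈ Finset.range n, x ^ i
  have hg : Continuous g := by fun_prop
  have hg1 : 1 < g 1 := by simpa [g, mul_comm] using hN
  have hgx : ∀ᶠ x in 𝓝[<] 1, 1 < g x :=
    (hg.tendsto 1).mono_left nhdsWithin_le_nhds |>.eventually (eventually_gt_nhds hg1)
  filter_upwards [hgx, Ioo_mem_nhdsLT zero_lt_one] with x hgx hx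
  have := one_sub_mul_sum_le hp hsum N (Ioo_subset_Icc_self hx)
  nlinarith [mul_lt_mul_of_pos_left hgx (sub_pos.2 hx.2)]

lemma eventually_lt_self_nhdsGT (hp : ∀ n, 0 ≤ p n) (hsum : HasSum p 1) {δ : ℝ}
    (hmean : HasSum (fun n : ℕ => (n : ℝ) * p n) δ) (hδ : 1 < δ) {q : ℝ}
    (hq : q ∈ Ico (0 : ℝ) 1) (hfq : pgf p q = q) :
    ∀ᶠ y in 𝓝[>] q, pgf p y < y := by
  obtain ⟨x, hfx, hqx, hx1⟩ :=
    ((eventually_lt_self_nhdsLT_one hp hsum hmean hδ).and (Ioo_mem_nhdsLT hq.2)).exists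
  filter_upwards [Ioo_mem_nhdsGT hqx] with y hy
  refine (convexOn hp hsum.summable).apply_lt_self_of_mem_openSegment ⟨hq.1, hq.2.le⟩
    ⟨hq.1.trans hqx.le, hx1.le⟩ hfq.le hfx ?_
  rwa [openSegment_eq_Ioo hqx]

lemma le_of_isLeast_thinned (hp : ∀ n, 0 ≤ p n) (hps : Summable p) {q c r : ℝ}
    (hq : IsLeast {x | x ∈ Ico (0 : ℝ) 1 ∧ pgf p x = x} q) (hc : c ∈ Icc (0 : ℝ) 1)
    (hr : IsLeast {x | x ∈ Ico (0 : ℝ) 1 ∧ pgf p (1 - c + c * x) = x} r) : q ≤ r := by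
  obtain ⟨⟨hr01, hfr⟩, -⟩ := hr
  have hr' : r ∈ Icc (0 : ℝ) 1 := Ico_subset_Icc_self hr01
  refine hq.le_of_apply_le hr01 ((continuousOn hp hps).mono (Icc_subset_Icc_right hr'.2))
    (nonneg hp le_rfl) ?_
  calc pgf p r ≤ pgf p (1 - c + c * r) :=
        monotoneOn hp hps hr' (one_sub_add_mul_mem_Icc hc hr') (le_one_sub_add_mul hc.2 hr'.2)
    _ = r := hfr

lemma eventually_isLeast_thinned_le (hp : ∀ n, 0 ≤ p n) (hps : Summable p) {ι : Type*}
    {l : Filter ι} {c r : ι → ℝ} (hc : ∀ i, c i ∈ Icc (0 : ℝ) 1) (hc1 : Tendsto c l (𝓝 1))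
    (hr : ∀ᶠ i in l, IsLeast {x | x ∈ Ico (0 : ℝ) 1 ∧ pgf p (1 - c i + c i * x) = x} (r i))
    {y : ℝ} (hy : y ∈ Ico (0 : ℝ) 1) (hfy : pgf p y < y) :
    ∀ᶠ i in l, r i ≤ y := by
  have hy' : y ∈ Icc (0 : ℝ) 1 := Ico_subset_Icc_self hy
  have harg : Tendsto (fun i => 1 - c i + c i * y) l (𝓝[Icc 0 1] y) := by
    refine tendsto_nhdsWithin_iff.2 ⟨?_, .of_forall fun i => one_sub_add_mul_mem_Icc (hc i) hy'⟩
    simpa using ((tendsto_const_nhds (x := (1 : ℝ))).sub hc1).add (hc1.mul_const y)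
  have hlt : ∀ᶠ i in l, pgf p (1 - c i + c i * y) < y :=
    ((continuousOn hp hps y hy').tendsto.comp harg).eventually (eventually_lt_nhds hfy)
  filter_upwards [hr, hlt] with i hri hlti
  have hmaps : MapsTo (fun x => 1 - c i + c i * x) (Icc 0 y) (Icc 0 1) := fun x hx =>
    one_sub_add_mul_mem_Icc (hc i) ⟨hx.1, hx.2.trans hy'.2⟩
  exact hri.le_of_apply_le hy ((continuousOn hp hps).comp (by fun_prop) hmaps)
    (nonneg hp (by simpa using (hc i).2)) hlti.le

end pgf

theorem stmt17_general (p : ℕ → ℝ) (hp : ∀ n, 0 ≤ p n) (hsum : ∑' n, p n = 1)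
    (δ : ℝ) (hsummean : Summable fun n : ℕ => (n : ℝ) * p n)
    (hmean : ∑' n : ℕ, (n : ℝ) * p n = δ) (hδ : 1 < δ)
    (f : ℝ → ℝ) (hf : ∀ z, f z = ∑' n : ℕ, p n * z ^ n)
    (q : ℝ) (hq : IsLeast {x | x ∈ Set.Ico (0:ℝ) 1 ∧ f x = x} q)
    (F : ℝ → ℝ) (hF0 : ∀ x, 0 ≤ F x) (hF1 : ∀ x, F x ≤ 1)
    (hFlim : Filter.Tendsto F Filter.atTop (nhds 1))
    (K₀ : ℝ)
    (qt : ℝ → ℝ)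
    (hqt : ∀ K, K₀ ≤ K →
      IsLeast {x | x ∈ Set.Ico (0:ℝ) 1 ∧ f (1 - F K + F K * x) = x} (qt K)) :
    Filter.Tendsto qt Filter.atTop (nhds q) := by
  obtain rfl : f = pgf p := funext hf
  have hps : Summable p := by
    by_contra h
    rw [tsum_eq_zero_of_not_summable h] at hsum
    exact zero_ne_one hsum
  have hF : ∀ K, F K ∈ Icc (0 : ℝ) 1 := fun K => ⟨hF0 K, hF1 K⟩
  have hqt' := (eventually_ge_atTop K₀).mono hqt
  obtain ⟨hq01, hfq⟩ := hq.1
  have hbelow := pgf.eventually_lt_self_nhdsGT hp (hsum ▸ hps.hasSum) (hmean ▸ hsummean.hasSum)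
    hδ hq01 hfq
  refine tendsto_order.2 ⟨fun a ha => ?_, fun a ha => ?_⟩
  · filter_upwards [hqt'] with K hK
    exact ha.trans_le (pgf.le_of_isLeast_thinned hp hps hq (hF K) hK)
  · obtain ⟨y, hfy, hqy, hy⟩ := (hbelow.and (Ioo_mem_nhdsGT (lt_min ha hq01.2))).exists
    obtain ⟨hya, hy1⟩ := lt_min_iff.1 hy
    filter_upwards [pgf.eventually_isLeast_thinned_le hp hps hF hFlim hqt'
      ⟨hq01.1.trans hqy.le, hy1⟩ hfy] with K hK
    exact hK.trans_lt hya

/-- Let `q ∈ [0,1)` be the smallest fixed point of the offspring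
generating function `f` of a Galton–Watson process with mean `δ ∈ (1,∞)`, and for `K`
let `q̃(K)` be the smallest fixed point in `[0,1)` of the thinned generating function
`f̃_K(x) = f(1 − F(K) + F(K)x)`, where `F` is a distribution function with `F(K) → 1` as
`K → ∞` and `δ F(K₀) > 1` for some `K₀`. Then `q̃(K) → q` as `K → ∞`. -/
theorem stmt17 (p : ℕ → ℝ) (hp : ∀ n, 0 ≤ p n) (hsum : ∑' n, p n = 1)
    (δ : ℝ) (hsummean : Summable fun n : ℕ => (n : ℝ) * p n)
    (hmean : ∑' n : ℕ, (n : ℝ) * p n = δ) (hδ : 1 < δ)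
    (f : ℝ → ℝ) (hf : ∀ z, f z = ∑' n : ℕ, p n * z ^ n)
    (q : ℝ) (hq : IsLeast {x | x ∈ Set.Ico (0:ℝ) 1 ∧ f x = x} q)
    (F : ℝ → ℝ) (hFmono : Monotone F) (hF0 : ∀ x, 0 ≤ F x) (hF1 : ∀ x, F x ≤ 1)
    (hFlim : Filter.Tendsto F Filter.atTop (nhds 1))
    (K₀ : ℝ) (hK₀ : 1 < δ * F K₀)
    (qt : ℝ → ℝ)
    (hqt : ∀ K, K₀ ≤ K →
      IsLeast {x | x ∈ Set.Ico (0:ℝ) 1 ∧ f (1 - F K + F K * x) = x} (qt K)) :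
    Filter.Tendsto qt Filter.atTop (nhds q) :=
  stmt17_general p hp hsum δ hsummean hmean hδ f hf q hq F hF0 hF1 hFlim K₀ qt hqt
end
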